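/- For an integer k ≥ 2, define α_k = (2k − 6k³ + 4k⁴ − k√(4k−1) + 4k²√(4k−1))/(2k²+1)². For all reals w₁, a, b ≥ 0 with w₁ + a + b = 1, if b ≤ w₁ or a = 0 or w₁ ≥ 1/2, then (w₁/(2k))³·C(2k,3) + (w₁/(2k))²·C(2k,2)·(1−w₁) + w₁(a²/4 + ab + b²/2) + a²b/4 ≤ α_k/6. -/

import Mathlib

/-!
Since `1 - w₁ = a + b`, the `(a, b)`-part exceeds `w₁ (1 - w₁)² / 2` by exactly `a² (b - w₁) / 4`,
which each case makes nonpositive. This leaves a cubic `f` in `t = w₁` alone. With `D = 2k² + 1`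
and `r = √(4k - 1)`, the gap `α_k / 6 - f(t)` factors as
`(D t - k (2k + 1 - r))² (k (2k + 1 + 2r) - D t) / (12 k² D²)`:
a double root at the maximiser and a linear factor that stays nonnegative for `t ≤ 1`.
-/

theorem Nat.cast_choose_three {K : Type*} [Field K] [CharZero K] (n : ℕ) :
    (n.choose 3 : K) = n * (n - 1) * (n - 2) / 6 := by
  rw [Nat.cast_choose_eq_descPochhammer_div]
  simp [descPochhammer_succ_right, Nat.factorial]

lemma weighted_pair_le {w a b : ℝ} (h : b ≤ w ∨ a = 0) :
    w * (a ^ 2 / 4 + a * b + b ^ 2 / 2) + a ^ 2 * b / 4 ≤ w * (a + b) ^ 2 / 2 := by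
  have hgap : w * (a + b) ^ 2 / 2 - (w * (a ^ 2 / 4 + a * b + b ^ 2 / 2) + a ^ 2 * b / 4)
      = a ^ 2 * (w - b) / 4 := by ring
  rcases h with h | rfl
  · nlinarith [mul_nonneg (sq_nonneg a) (sub_nonneg.mpr h)]
  · linarith

noncomputable def alpha (K : ℝ) : ℝ :=
  (2 * K - 6 * K ^ 3 + 4 * K ^ 4 - K * √(4 * K - 1) + 4 * K ^ 2 * √(4 * K - 1)) / (2 * K ^ 2 + 1) ^ 2

noncomputable def profile (K t : ℝ) : ℝ :=
  (t / (2 * K)) ^ 3 * ((2 * K) * (2 * K - 1) * (2 * K - 2) / 6)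
    + (t / (2 * K)) ^ 2 * (K * (2 * K - 1)) * (1 - t) + t * (1 - t) ^ 2 / 2

lemma alpha_div_six_sub_profile {K : ℝ} (hK : 1 / 4 ≤ K) (t : ℝ) :
    alpha K / 6 - profile K t
      = ((2 * K ^ 2 + 1) * t - K * (2 * K + 1 - √(4 * K - 1))) ^ 2
          * (K * (2 * K + 1 + 2 * √(4 * K - 1)) - (2 * K ^ 2 + 1) * t)
          / (12 * K ^ 2 * (2 * K ^ 2 + 1) ^ 2) := by
  have hK0 : K ≠ 0 := by positivity
  unfold alpha profile
  set r := √(4 * K - 1)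
  have hr : r ^ 2 = 4 * K - 1 := Real.sq_sqrt (by linarith)
  field_simp
  linear_combination -24 * K ^ 2 * (3 * t - 3 * K + 2 * K * r - 6 * K ^ 2 + 6 * K ^ 2 * t) * hr

lemma profile_le_alpha_div_six {K t : ℝ} (hK : 1 ≤ K) (ht : t ≤ 1) :
    profile K t ≤ alpha K / 6 := by
  have hgap := alpha_div_six_sub_profile (by linarith : 1 / 4 ≤ K) t
  have hr : 0 ≤ √(4 * K - 1) := Real.sqrt_nonneg _
  have hlinear : 0 ≤ K * (2 * K + 1 + 2 * √(4 * K - 1)) - (2 * K ^ 2 + 1) * t := by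
    nlinarith [mul_nonneg (by linarith : (0 : ℝ) ≤ K) hr]
  have : 0 ≤ alpha K / 6 - profile K t := by
    rw [hgap]
    positivity
  linarith

theorem stmt_17_general (k : ℕ) (hk : 2 ≤ k) (w₁ a b : ℝ)
    (ha : 0 ≤ a) (hb : 0 ≤ b) (hsum : w₁ + a + b = 1)
    (hcase : b ≤ w₁ ∨ a = 0 ∨ w₁ ≥ 1/2) :
    (w₁/(2*k))^3 * (Nat.choose (2*k) 3 : ℝ)
      + (w₁/(2*k))^2 * (Nat.choose (2*k) 2 : ℝ) * (1 - w₁)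
      + w₁*(a^2/4 + a*b + b^2/2) + a^2*b/4
    ≤ ((2*(k:ℝ) - 6*(k:ℝ)^3 + 4*(k:ℝ)^4 - (k:ℝ)*Real.sqrt (4*(k:ℝ) - 1)
        + 4*(k:ℝ)^2*Real.sqrt (4*(k:ℝ) - 1)) / (2*(k:ℝ)^2 + 1)^2) / 6 := by
  have hK : (1 : ℝ) ≤ k := by exact_mod_cast (by omega : 1 ≤ k)
  have hchoose2 : ((2 * k).choose 2 : ℝ) = k * (2 * k - 1) := by
    rw [Nat.cast_choose_two]; push_cast; ring
  have hchoose3 : ((2 * k).choose 3 : ℝ) = (2 * k) * (2 * k - 1) * (2 * k - 2) / 6 := by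
    rw [Nat.cast_choose_three]; push_cast; ring
  have hpair : w₁ * (a ^ 2 / 4 + a * b + b ^ 2 / 2) + a ^ 2 * b / 4 ≤ w₁ * (1 - w₁) ^ 2 / 2 := by
    rw [show 1 - w₁ = a + b by linarith]
    apply weighted_pair_le
    rcases hcase with h | h | h
    · exact .inl h
    · exact .inr h
    · exact .inl (by linarith)
  have hprofile := profile_le_alpha_div_six (t := w₁) hK (by linarith)
  unfold profile alpha at hprofile
  rw [hchoose2, hchoose3]
  linarith

theorem stmt_17 (k : ℕ) (hk : 2 ≤ k) (w₁ a b : ℝ)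
    (hw : 0 ≤ w₁) (ha : 0 ≤ a) (hb : 0 ≤ b) (hsum : w₁ + a + b = 1)
    (hcase : b ≤ w₁ ∨ a = 0 ∨ w₁ ≥ 1/2) :
    (w₁/(2*k))^3 * (Nat.choose (2*k) 3 : ℝ)
      + (w₁/(2*k))^2 * (Nat.choose (2*k) 2 : ℝ) * (1 - w₁)
      + w₁*(a^2/4 + a*b + b^2/2) + a^2*b/4
    ≤ ((2*(k:ℝ) - 6*(k:ℝ)^3 + 4*(k:ℝ)^4 - (k:ℝ)*Real.sqrt (4*(k:ℝ) - 1)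
        + 4*(k:ℝ)^2*Real.sqrt (4*(k:ℝ) - 1)) / (2*(k:ℝ)^2 + 1)^2) / 6 :=
  stmt_17_general k hk w₁ a b ha hb hsum hcase
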